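/- One has ∫₀^{X} u(x)² / cosh²(x) dx ≤ (2 / cosh(X/2)) · ∫₀^{X} u(x)² dx. -/

import Mathlib

/-!
Write `w = u²`. The equation gives `w'' = 2u'² + 2(b - h² cosh²)u² ≥ w` on `[0, X]`, and either
boundary condition gives `w'(0) = 0`; comparing `w` on `[x, X]` with `w(x) cosh(· - x)`, which
solves `g'' = g`, yields `w(x) cosh(y - x) ≤ w(y)` for `0 ≤ x ≤ y ≤ X`. Hence on `[0, X/2]`
`w(x)/cosh² x ≤ w(x + X/2)/cosh(X/2)`, while on `[X/2, X]` simply `1/cosh² x ≤ 1/cosh(X/2)`: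
each half of the weighted integral is at most `cosh(X/2)⁻¹ ∫_{X/2}^X w`.
-/

open Set Real

section SecondOrder

variable {a b : ℝ} {f f' f'' : ℝ → ℝ}

theorem monotoneOn_Icc_of_hasDerivWithinAt_nonneg
    (hf : ∀ x ∈ Icc a b, HasDerivWithinAt f (f' x) (Icc a b) x)
    (hf'₀ : ∀ x ∈ Ioo a b, 0 ≤ f' x) : MonotoneOn f (Icc a b) := by
  refine monotoneOn_of_hasDerivWithinAt_nonneg (convex_Icc a b)
    (fun x hx ↦ (hf x hx).continuousWithinAt) (fun x hx ↦ ?_) (by rwa [interior_Icc])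
  rw [interior_Icc] at hx ⊢
  exact (hf x (Ioo_subset_Icc_self hx)).mono Ioo_subset_Icc_self

/-- Uses `f'' - f = eˣ (e⁻ˣ (f' + f))'` and `f' + f = e⁻ˣ (eˣ f)'`. -/
theorem nonneg_of_le_secondDeriv
    (hf : ∀ x ∈ Icc a b, HasDerivWithinAt f (f' x) (Icc a b) x)
    (hf' : ∀ x ∈ Icc a b, HasDerivWithinAt f' (f'' x) (Icc a b) x)
    (hle : ∀ x ∈ Icc a b, f x ≤ f'' x) (ha : 0 ≤ f a) (ha' : 0 ≤ f' a) :
    ∀ x ∈ Icc a b, 0 ≤ f x := by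
  intro x hx
  have hab : a ≤ b := hx.1.trans hx.2
  have hsum : ∀ z ∈ Icc a b, 0 ≤ f' z + f z := by
    intro z hz
    have hmono : MonotoneOn (fun t ↦ (f' t + f t) * exp (-t)) (Icc a b) := by
      refine monotoneOn_Icc_of_hasDerivWithinAt_nonneg
        (fun t ht ↦ ((hf' t ht).add (hf t ht)).mul (hasDerivAt_neg t).exp.hasDerivWithinAt)
        fun t ht ↦ ?_
      have := hle t (Ioo_subset_Icc_self ht)
      have := exp_pos (-t)
      simp only [Pi.add_apply]
      nlinarith
    have := hmono (left_mem_Icc.2 hab) hz hz.1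
    have := exp_pos (-z)
    have := exp_pos (-a)
    nlinarith
  have hmono : MonotoneOn (fun t ↦ f t * exp t) (Icc a b) := by
    refine monotoneOn_Icc_of_hasDerivWithinAt_nonneg
      (fun t ht ↦ (hf t ht).mul (hasDerivAt_exp t).hasDerivWithinAt) fun t ht ↦ ?_
    have := hsum t (Ioo_subset_Icc_self ht)
    have := exp_pos t
    nlinarith
  have := hmono (left_mem_Icc.2 hab) hx hx.1
  have := exp_pos x
  have := exp_pos a
  nlinarith

theorem mul_cosh_sub_le_of_le_secondDeriv
    (hf : ∀ x ∈ Icc a b, HasDerivWithinAt f (f' x) (Icc a b) x)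
    (hf' : ∀ x ∈ Icc a b, HasDerivWithinAt f' (f'' x) (Icc a b) x)
    (hle : ∀ x ∈ Icc a b, f x ≤ f'' x) (ha : 0 ≤ f a) (ha' : 0 ≤ f' a)
    {x y : ℝ} (hax : a ≤ x) (hxy : x ≤ y) (hyb : y ≤ b) :
    f x * cosh (y - x) ≤ f y := by
  have hf_nonneg := nonneg_of_le_secondDeriv hf hf' hle ha ha'
  have hx : x ∈ Icc a b := ⟨hax, hxy.trans hyb⟩
  have hf'x : 0 ≤ f' x :=
    ha'.trans <| monotoneOn_Icc_of_hasDerivWithinAt_nonneg hf'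
      (fun t ht ↦ (hf_nonneg t (Ioo_subset_Icc_self ht)).trans (hle t (Ioo_subset_Icc_self ht)))
      (left_mem_Icc.2 (hax.trans (hxy.trans hyb))) hx hax
  have hsub : Icc x b ⊆ Icc a b := Icc_subset_Icc_left hax
  have hcosh (z : ℝ) : HasDerivWithinAt (fun t ↦ cosh (t - x)) (sinh (z - x)) (Icc x b) z := by
    simpa using ((hasDerivAt_id z).sub_const x).cosh.hasDerivWithinAt
  have hsinh (z : ℝ) : HasDerivWithinAt (fun t ↦ sinh (t - x)) (cosh (z - x)) (Icc x b) z := by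
    simpa using ((hasDerivAt_id z).sub_const x).sinh.hasDerivWithinAt
  have key := nonneg_of_le_secondDeriv (a := x) (b := b)
    (f := fun t ↦ f t - f x * cosh (t - x)) (f' := fun t ↦ f' t - f x * sinh (t - x))
    (f'' := fun t ↦ f'' t - f x * cosh (t - x))
    (fun t ht ↦ ((hf t (hsub ht)).mono hsub).sub ((hcosh t).const_mul (f x)))
    (fun t ht ↦ ((hf' t (hsub ht)).mono hsub).sub ((hsinh t).const_mul (f x)))
    (fun t ht ↦ by linarith [hle t (hsub ht)]) (by simp) (by simpa using hf'x) y ⟨hxy, hyb⟩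
  linarith

end SecondOrder

theorem sq_mul_cosh_sub_le_sq_of_eq_mul {a b : ℝ} {u u' u'' q : ℝ → ℝ}
    (hu : ∀ x ∈ Icc a b, HasDerivWithinAt u (u' x) (Icc a b) x)
    (hu' : ∀ x ∈ Icc a b, HasDerivWithinAt u' (u'' x) (Icc a b) x)
    (hode : ∀ x ∈ Icc a b, u'' x = q x * u x) (hq : ∀ x ∈ Icc a b, 1 / 2 ≤ q x)
    (ha : u a * u' a = 0) {x y : ℝ} (hax : a ≤ x) (hxy : x ≤ y) (hyb : y ≤ b) :
    u x ^ 2 * cosh (y - x) ≤ u y ^ 2 := by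
  refine mul_cosh_sub_le_of_le_secondDeriv (f := fun t ↦ u t ^ 2) (f' := fun t ↦ 2 * (u t * u' t))
    (f'' := fun t ↦ 2 * (u' t * u' t + u t * u'' t))
    (fun t ht ↦ by simpa [mul_assoc] using (hu t ht).fun_pow 2)
    (fun t ht ↦ ((hu t ht).mul (hu' t ht)).const_mul 2) (fun t ht ↦ ?_) (sq_nonneg _)
    (by simp [ha]) hax hxy hyb
  rw [hode t ht]
  nlinarith [hq t ht, sq_nonneg (u t), sq_nonneg (u' t)]

section CoshWeight

variable {X : ℝ} {w : ℝ → ℝ}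

theorem ContinuousOn.div_cosh_sq {s : Set ℝ} (hw : ContinuousOn w s) :
    ContinuousOn (fun x ↦ w x / cosh x ^ 2) s :=
  hw.div (continuous_cosh.pow 2).continuousOn fun x _ ↦ by positivity

theorem integral_div_cosh_sq_le_div_cosh {s t : ℝ} (hs : 0 ≤ s) (hst : s ≤ t)
    (hw : ContinuousOn w (Icc s t)) (hw₀ : ∀ x ∈ Icc s t, 0 ≤ w x) :
    ∫ x in s..t, w x / cosh x ^ 2 ≤ (∫ x in s..t, w x) / cosh s := by
  rw [← intervalIntegral.integral_div]
  refine intervalIntegral.integral_mono_on hst (hw.div_cosh_sq.intervalIntegrable_of_Icc hst)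
    ((hw.intervalIntegrable_of_Icc hst).div_const _) fun x hx ↦ ?_
  have hsx : cosh s ≤ cosh x := by
    rw [cosh_le_cosh, abs_of_nonneg hs, abs_of_nonneg (hs.trans hx.1)]
    exact hx.1
  refine div_le_div_of_nonneg_left (hw₀ x hx) (cosh_pos s) ?_
  nlinarith [one_le_cosh x]

theorem integral_div_cosh_sq_le_of_shift (hX : 0 ≤ X) (hw : ContinuousOn w (Icc 0 X))
    (hw₀ : ∀ x ∈ Icc 0 X, 0 ≤ w x)
    (hgrowth : ∀ x ∈ Icc 0 (X / 2), w x * cosh (X / 2) ≤ w (x + X / 2)) :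
    ∫ x in 0..X / 2, w x / cosh x ^ 2 ≤ (∫ x in X / 2..X, w x) / cosh (X / 2) := by
  have hX2 : 0 ≤ X / 2 := by linarith
  have hshift : MapsTo (· + X / 2) (Icc 0 (X / 2)) (Icc 0 X) :=
    fun x hx ↦ ⟨by linarith [hx.1], by linarith [hx.2]⟩
  have hint : IntervalIntegrable (fun x ↦ w (x + X / 2) / cosh (X / 2)) MeasureTheory.volume
      0 (X / 2) :=
    ((hw.comp (continuous_add_const _).continuousOn hshift).div_const _).intervalIntegrable_of_Icc
      hX2
  calc ∫ x in 0..X / 2, w x / cosh x ^ 2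
      ≤ ∫ x in 0..X / 2, w (x + X / 2) / cosh (X / 2) := by
        refine intervalIntegral.integral_mono_on hX2
          ((hw.mono (Icc_subset_Icc_right (by linarith))).div_cosh_sq.intervalIntegrable_of_Icc
            hX2) hint fun x hx ↦ ?_
        have hx0 : 0 ≤ w x := hw₀ x ⟨hx.1, by linarith [hx.2]⟩
        calc w x / cosh x ^ 2 ≤ w x := div_le_self hx0 (one_le_pow₀ (one_le_cosh x))
          _ ≤ w (x + X / 2) / cosh (X / 2) := (le_div_iff₀ (cosh_pos _)).2 (hgrowth x hx)
    _ = (∫ x in X / 2..X, w x) / cosh (X / 2) := by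
        rw [intervalIntegral.integral_div, intervalIntegral.integral_comp_add_right]
        ring_nf

theorem integral_div_cosh_sq_le (hX : 0 ≤ X) (hw : ContinuousOn w (Icc 0 X))
    (hw₀ : ∀ x ∈ Icc 0 X, 0 ≤ w x)
    (hgrowth : ∀ x ∈ Icc 0 (X / 2), w x * cosh (X / 2) ≤ w (x + X / 2)) :
    ∫ x in 0..X, w x / cosh x ^ 2 ≤ 2 / cosh (X / 2) * ∫ x in 0..X, w x := by
  have hX2 : 0 ≤ X / 2 := by linarith
  have hX2X : X / 2 ≤ X := by linarith
  have hleft : Icc 0 (X / 2) ⊆ Icc 0 X := Icc_subset_Icc_right hX2X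
  have hright : Icc (X / 2) X ⊆ Icc 0 X := Icc_subset_Icc_left hX2
  rw [← intervalIntegral.integral_add_adjacent_intervals
      ((hw.mono hleft).div_cosh_sq.intervalIntegrable_of_Icc hX2)
      ((hw.mono hright).div_cosh_sq.intervalIntegrable_of_Icc hX2X),
    ← intervalIntegral.integral_add_adjacent_intervals
      ((hw.mono hleft).intervalIntegrable_of_Icc hX2)
      ((hw.mono hright).intervalIntegrable_of_Icc hX2X)]
  have hleft₀ : 0 ≤ ∫ x in 0..X / 2, w x :=
    intervalIntegral.integral_nonneg hX2 fun x hx ↦ hw₀ x (hleft hx)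
  calc (∫ x in 0..X / 2, w x / cosh x ^ 2) + ∫ x in X / 2..X, w x / cosh x ^ 2
      ≤ (∫ x in X / 2..X, w x) / cosh (X / 2) + (∫ x in X / 2..X, w x) / cosh (X / 2) :=
        add_le_add (integral_div_cosh_sq_le_of_shift hX hw hw₀ hgrowth)
          (integral_div_cosh_sq_le_div_cosh hX2 hX2X (hw.mono hright) fun x hx ↦
            hw₀ x (hright hx))
    _ = 2 / cosh (X / 2) * ∫ x in X / 2..X, w x := by ring
    _ ≤ 2 / cosh (X / 2) * ((∫ x in 0..X / 2, w x) + ∫ x in X / 2..X, w x) := by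
        gcongr
        linarith

end CoshWeight

theorem mathieu_cosh_weight_estimate_general
    (X : ℝ) (hX : 0 < X) (h b : ℝ)
    (u u' u'' : ℝ → ℝ)
    (hu' : ∀ x ∈ Set.Icc (0:ℝ) X, HasDerivWithinAt u (u' x) (Set.Icc 0 X) x)
    (hu'' : ∀ x ∈ Set.Icc (0:ℝ) X, HasDerivWithinAt u' (u'' x) (Set.Icc 0 X) x)
    (hode : ∀ x ∈ Set.Icc (0:ℝ) X,
      -u'' x + (b - h ^ 2 * Real.cosh x ^ 2) * u x = 0)
    (hgap : b - h ^ 2 * Real.cosh X ^ 2 ≥ 1/2)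
    (hbc : u 0 = 0 ∨ u' 0 = 0) :
    (∫ x in (0:ℝ)..X, u x ^ 2 / Real.cosh x ^ 2)
      ≤ (2 / Real.cosh (X/2)) * ∫ x in (0:ℝ)..X, u x ^ 2 := by
  have hq : ∀ x ∈ Icc 0 X, 1 / 2 ≤ b - h ^ 2 * cosh x ^ 2 := fun x hx ↦ by
    have : cosh x ^ 2 ≤ cosh X ^ 2 := by
      gcongr
      rw [cosh_le_cosh, abs_of_nonneg hx.1, abs_of_nonneg hX.le]
      exact hx.2
    nlinarith [sq_nonneg h]
  have h0 : u 0 * u' 0 = 0 := by rcases hbc with h0 | h0 <;> simp [h0]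
  refine integral_div_cosh_sq_le hX.le (fun x hx ↦ (hu' x hx).continuousWithinAt.pow 2)
    (fun x _ ↦ sq_nonneg _) fun x hx ↦ ?_
  have := sq_mul_cosh_sub_le_sq_of_eq_mul hu' hu'' (fun t ht ↦ by linarith [hode t ht]) hq h0
    (y := x + X / 2) hx.1 (by linarith) (by linarith [hx.2])
  rwa [add_sub_cancel_left] at this

/-- For a radial Mathieu function `u` with `−u'' + (b − h² cosh²)u = 0` on `[0,X]`,
`b − h² cosh²(X) ≥ 1/2`, and Dirichlet or Neumann condition at `0`:
`∫₀^X u²/cosh² ≤ (2/cosh(X/2)) ∫₀^X u²`. -/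
theorem mathieu_cosh_weight_estimate
    (X : ℝ) (hX : 0 < X) (h b : ℝ)
    (u u' u'' : ℝ → ℝ)
    (hu' : ∀ x ∈ Set.Icc (0:ℝ) X, HasDerivWithinAt u (u' x) (Set.Icc 0 X) x)
    (hu'' : ∀ x ∈ Set.Icc (0:ℝ) X, HasDerivWithinAt u' (u'' x) (Set.Icc 0 X) x)
    (hu''cont : ContinuousOn u'' (Set.Icc 0 X))
    (hode : ∀ x ∈ Set.Icc (0:ℝ) X,
      -u'' x + (b - h ^ 2 * Real.cosh x ^ 2) * u x = 0)
    (hgap : b - h ^ 2 * Real.cosh X ^ 2 ≥ 1/2)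
    (hbc : u 0 = 0 ∨ u' 0 = 0) :
    (∫ x in (0:ℝ)..X, u x ^ 2 / Real.cosh x ^ 2)
      ≤ (2 / Real.cosh (X/2)) * ∫ x in (0:ℝ)..X, u x ^ 2 :=
  mathieu_cosh_weight_estimate_general X hX h b u u' u'' hu' hu'' hode hgap hbc
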